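/- For every C¹ function f : ℤ_p → ℂ_p, the Radon-Nikodym derivative of μ_{f,q} recovers f: f_{μ_{f,q}}(a) = lim_{n→∞} [p^n]_q μ_{f,q}(a + p^n ℤ_p) = f(a) for all a ∈ ℤ_p. -/

import Mathlib

open Filter Finset Topology

variable {p : ℕ} [hp : Fact p.Prime] {K : Type*} [NontriviallyNormedField K]

/-- The `q`-analogue `[n]_q = (1 - q^n)/(1 - q)` of a natural number `n`. -/
noncomputable def qNum (q : K) (n : ℕ) : K := (1 - q ^ n) / (1 - q)

/-- `f : ℤ_p → K` is a `C¹` (strictly differentiable) function: the difference quotient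
`Δ₁f(m,x) = (f(x+m) - f(x))/m` extends to a continuous function of `(m, x)`. Here
`ι : ℤ_p →+* K` is the (isometric) embedding of `ℤ_p` into `K`. -/
def IsC1 (ι : PadicInt p →+* K) (f : PadicInt p → K) : Prop :=
  ∃ Df : PadicInt p × PadicInt p → K, Continuous Df ∧
    ∀ m x : PadicInt p, m ≠ 0 → Df (m, x) * ι m = f (x + m) - f x

/-- A `K`-valued distribution on `ℤ_p`: `μ x n` is the value on the ball `x + pⁿℤ_p`;
it depends only on the ball and is finitely additive under splitting a ball of level `n`
into the `p` balls of level `n+1`. -/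
def IsDist (μ : PadicInt p → ℕ → K) : Prop :=
  (∀ (x y : PadicInt p) (n : ℕ), ‖x - y‖ ≤ (p : ℝ) ^ (-(n : ℤ)) → μ x n = μ y n) ∧
  ∀ (x : PadicInt p) (n : ℕ),
    μ x n = ∑ i ∈ range p, μ (x + (i : PadicInt p) * (p : PadicInt p) ^ n) (n + 1)

private lemma na_natCast (hna : IsNonarchimedean (‖·‖ : K → ℝ)) (n : ℕ) : ‖(n : K)‖ ≤ 1 := by
  induction n with
  | zero => simp
  | succ n ih =>
    push_cast
    refine le_trans (hna _ 1) (max_le ih (by simp))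

private lemma na_sum {α : Type*} (hna : IsNonarchimedean (‖·‖ : K → ℝ)) (s : Finset α)
    (g : α → K) {C : ℝ} (hC : 0 ≤ C) (h : ∀ i ∈ s, ‖g i‖ ≤ C) : ‖∑ i ∈ s, g i‖ ≤ C := by
  induction s using Finset.cons_induction with
  | empty => simpa using hC
  | cons a s ha ih =>
    rw [Finset.sum_cons]
    exact le_trans (hna _ _) (max_le (h a (Finset.mem_cons_self ..))
      (ih fun i hi => h i (Finset.mem_cons_of_mem hi)))

private lemma na_add_eq_left (hna : IsNonarchimedean (‖·‖ : K → ℝ)) {a b : K} (h : ‖b‖ < ‖a‖) :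
    ‖a + b‖ = ‖a‖ := by
  refine le_antisymm (le_trans (hna a b) (max_le le_rfl h.le)) ?_
  have h2 : ‖a‖ ≤ max ‖a + b‖ ‖b‖ := by simpa using hna (a + b) (-b)
  rcases le_max_iff.mp h2 with h3 | h3
  · exact h3
  · linarith

private lemma sum_range_mul_decomp (g : ℕ → K) (a b : ℕ) :
    ∑ i ∈ range (a * b), g i = ∑ j ∈ range a, ∑ r ∈ range b, g (j * b + r) := by
  induction a with
  | zero => simp
  | succ a ih =>
    rw [Nat.succ_mul, Finset.sum_range_add, ih, Finset.sum_range_succ]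

private lemma telescope (hna : IsNonarchimedean (‖·‖ : K → ℝ)) (hpK : ‖(p : K)‖ = (p : ℝ)⁻¹)
    {g : ℕ → K} {C : ℝ} (hC : 0 ≤ C)
    (h : ∀ k j r : ℕ, j < p → r < p ^ k → ‖g (j * p ^ k + r) - g r‖ ≤ C * ((p:ℝ)⁻¹) ^ k) :
    ∀ m, ‖(∑ i ∈ range (p ^ m), g i) - (p : K) ^ m * g 0‖ ≤ C * (p:ℝ) * ((p:ℝ)⁻¹) ^ m := by
  have hP1 : (1:ℝ) < p := by exact_mod_cast hp.out.one_lt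
  have hP0 : (0:ℝ) < p := by linarith
  have hna' : ∀ x y : K, ‖x + y‖ ≤ max ‖x‖ ‖y‖ := hna
  intro m
  induction m with
  | zero => simp; positivity
  | succ m ih =>
    have hEq : C * (p:ℝ) * ((p:ℝ)⁻¹) ^ (m+1) = C * ((p:ℝ)⁻¹) ^ m := by
      rw [pow_succ']
      field_simp
    have hsplit : ∑ i ∈ range (p ^ (m+1)), g i
        = ∑ j ∈ range p, ∑ r ∈ range (p ^ m), g (j * p ^ m + r) := by
      rw [pow_succ']
      exact sum_range_mul_decomp g p (p ^ m)
    have hkey : (∑ i ∈ range (p ^ (m+1)), g i) - (p:K) ^ (m+1) * g 0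
        = (∑ j ∈ range p, ∑ r ∈ range (p ^ m), (g (j * p ^ m + r) - g r))
          + (p:K) * ((∑ i ∈ range (p ^ m), g i) - (p:K) ^ m * g 0) := by
      rw [hsplit]
      have h1 : ∑ j ∈ range p, ∑ r ∈ range (p ^ m), (g (j * p ^ m + r) - g r)
          = (∑ j ∈ range p, ∑ r ∈ range (p ^ m), g (j * p ^ m + r))
            - (p:K) * ∑ r ∈ range (p ^ m), g r := by
        simp [Finset.sum_sub_distrib, Finset.sum_const, Finset.card_range, nsmul_eq_mul]
      rw [h1]
      ring
    rw [hkey, hEq]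
    refine le_trans (hna' _ _) (max_le ?_ ?_)
    · refine na_sum hna _ _ (by positivity) ?_
      intro j hj
      refine na_sum hna _ _ (by positivity) ?_
      intro r hr
      exact h m j r (Finset.mem_range.mp hj) (Finset.mem_range.mp hr)
    · rw [norm_mul, hpK]
      calc (p:ℝ)⁻¹ * ‖(∑ i ∈ range (p ^ m), g i) - (p:K) ^ m * g 0‖
          ≤ (p:ℝ)⁻¹ * (C * (p:ℝ) * ((p:ℝ)⁻¹) ^ m) := by
            exact mul_le_mul_of_nonneg_left ih (by positivity)
        _ = C * ((p:ℝ)⁻¹) ^ m := by field_simp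

private lemma pow_p_norm (hna : IsNonarchimedean (‖·‖ : K → ℝ)) (hpK : ‖(p : K)‖ = (p : ℝ)⁻¹)
    {x : K} (hx : ‖x - 1‖ < (p : ℝ) ^ (-1 / ((p:ℝ) - 1))) :
    ‖x ^ p - 1‖ = (p:ℝ)⁻¹ * ‖x - 1‖ := by
  have hP1 : (1:ℝ) < p := by exact_mod_cast hp.out.one_lt
  have hP0 : (0:ℝ) < p := by linarith
  have hrb1 : (p : ℝ) ^ (-1 / ((p:ℝ) - 1)) < 1 :=
    Real.rpow_lt_one_of_one_lt_of_neg hP1 (div_neg_of_neg_of_pos (by norm_num) (by linarith))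
  rcases eq_or_ne x 1 with rfl | hx1
  · simp
  have ht0 : (0:ℝ) < ‖x - 1‖ := norm_pos_iff.2 (sub_ne_zero.2 hx1)
  have ht1 : ‖x - 1‖ < 1 := hx.trans hrb1
  have htp : ‖x - 1‖ ^ (p - 1) < (p:ℝ)⁻¹ := by
    have h1 : ‖x - 1‖ ^ (p-1) < ((p : ℝ) ^ (-1 / ((p:ℝ) - 1))) ^ (p - 1) :=
      pow_lt_pow_left₀ hx (norm_nonneg _) (by have := hp.out.two_le; omega)
    have h2 : ((p : ℝ) ^ (-1 / ((p:ℝ) - 1))) ^ (p - 1) = (p:ℝ)⁻¹ := by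
      rw [← Real.rpow_natCast ((p : ℝ) ^ (-1 / ((p:ℝ) - 1))) (p-1), ← Real.rpow_mul hP0.le]
      have hcast : ((p - 1 : ℕ) : ℝ) = (p:ℝ) - 1 := by
        have := hp.out.one_le
        push_cast [Nat.cast_sub this]
        ring
      rw [hcast, div_mul_cancel₀, Real.rpow_neg_one]
      · linarith
    rwa [h2] at h1
  obtain ⟨nn, hnn⟩ : ∃ nn, p = nn + 2 := ⟨p - 2, by have := hp.out.two_le; omega⟩
  set t := x - 1 with htdef
  have hxt : x = t + 1 := by rw [htdef]; ring
  have htp' : ‖t‖ ^ (nn+1) < (p:ℝ)⁻¹ := by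
    rw [show nn + 1 = p - 1 by omega]; exact htp
  have hexp : x ^ p = (∑ k ∈ range (nn+1), t ^ (k+2) * (p.choose (k+2) : K)) + (t * p + 1) := by
    rw [hxt, add_pow]
    simp only [one_pow, mul_one]
    rw [show p + 1 = (nn + 1) + 1 + 1 by omega, Finset.sum_range_succ', Finset.sum_range_succ']
    simp only [Nat.choose_zero_right, Nat.choose_one_right, pow_zero, pow_one, Nat.cast_one,
      Nat.cast_ofNat]
    push_cast [Nat.choose_one_right]
    ring
  set M : ℝ := ‖t‖ * max ((p:ℝ)⁻¹ * ‖t‖) (‖t‖ ^ (nn+1)) with hM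
  have hsum : ‖∑ k ∈ range (nn+1), t ^ (k+2) * (p.choose (k+2) : K)‖ ≤ M := by
    refine na_sum hna _ _ (by positivity) ?_
    intro k hk
    rw [Finset.mem_range, Nat.lt_succ_iff] at hk
    rw [norm_mul, norm_pow]
    rcases eq_or_lt_of_le hk with hk2 | hk2
    · have : p.choose (k+2) = 1 := by rw [hk2, ← hnn, Nat.choose_self]
      rw [this, Nat.cast_one, norm_one, mul_one, show k + 2 = (nn+1) + 1 by omega, pow_succ,
        mul_comm]
      exact mul_le_mul_of_nonneg_left (le_max_right _ _) (norm_nonneg _)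
    · obtain ⟨mm, hmm⟩ := hp.out.dvd_choose_self (by omega : k+2 ≠ 0) (by omega : k+2 < p)
      rw [hmm]
      push_cast
      rw [norm_mul, hpK]
      calc ‖t‖ ^ (k+2) * ((p:ℝ)⁻¹ * ‖(mm : K)‖)
          ≤ ‖t‖ ^ 2 * ((p:ℝ)⁻¹ * 1) := by
            refine mul_le_mul (pow_le_pow_of_le_one (norm_nonneg _) ht1.le (by omega)) ?_
              (by positivity) (by positivity)
            exact mul_le_mul_of_nonneg_left (na_natCast hna mm) (by positivity)
        _ = ‖t‖ * ((p:ℝ)⁻¹ * ‖t‖) := by ring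
        _ ≤ M := mul_le_mul_of_nonneg_left (le_max_left _ _) (norm_nonneg _)
  have hMlt : M < ‖t * (p:K)‖ := by
    rw [norm_mul, hpK, hM, mul_comm ‖t‖ ((p:ℝ)⁻¹), mul_comm ((p:ℝ)⁻¹) ‖t‖]
    refine mul_lt_mul_of_pos_left ?_ ht0
    refine max_lt ?_ htp'
    have : (0:ℝ) < (p:ℝ)⁻¹ := by positivity
    nlinarith
  have hxp1 : x ^ p - 1 = t * (p:K) + ∑ k ∈ range (nn+1), t ^ (k+2) * (p.choose (k+2) : K) := by
    rw [hexp]; ring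
  rw [hxp1, na_add_eq_left hna (lt_of_le_of_lt hsum hMlt), norm_mul, hpK, mul_comm]

private lemma pow_pk_norm (hna : IsNonarchimedean (‖·‖ : K → ℝ)) (hpK : ‖(p : K)‖ = (p : ℝ)⁻¹)
    {q : K} (hq : ‖q - 1‖ < (p : ℝ) ^ (-1 / ((p:ℝ) - 1))) (k : ℕ) :
    ‖q ^ p ^ k - 1‖ = ((p:ℝ)⁻¹) ^ k * ‖q - 1‖ := by
  have hP1 : (1:ℝ) < p := by exact_mod_cast hp.out.one_lt
  have hP0 : (0:ℝ) < p := by linarith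
  induction k with
  | zero => simp
  | succ k ih =>
    have hle : ((p:ℝ)⁻¹) ^ k * ‖q - 1‖ ≤ ‖q - 1‖ := by
      have h1 : ((p:ℝ)⁻¹) ^ k ≤ 1 :=
        pow_le_one₀ (by positivity) (inv_le_one_of_one_le₀ hP1.le)
      nlinarith [norm_nonneg (q - 1)]
    have hx : ‖q ^ p ^ k - 1‖ < (p : ℝ) ^ (-1 / ((p:ℝ) - 1)) := by
      rw [ih]; exact lt_of_le_of_lt hle hq
    have hstep := pow_p_norm hna hpK hx
    rw [pow_succ, pow_mul, hstep, ih]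
    ring
/-- for every C¹ function `f : ℤ_p → K`, the Radon-Nikodym derivative of
`μ_{f,q}` recovers `f`: `lim_n [p^n]_q μ_{f,q}(a + p^n ℤ_p) = f(a)` for all `a ∈ ℤ_p`. -/
theorem mu_fq_derivative_recovers_f
(q : K) (hna : IsNonarchimedean (‖·‖ : K → ℝ)) (hpK : ‖(p : K)‖ = (p : ℝ)⁻¹)
    (hq : ‖1 - q‖ < (p : ℝ) ^ (-1 / ((p : ℝ) - 1))) (hq1 : q ≠ 1)
    (ι : PadicInt p →+* K) (hι : ∀ z, ‖ι z‖ = ‖z‖)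
    (f : PadicInt p → K) (hf : IsC1 ι f)
    (μf : PadicInt p → ℕ → K)
    (hμf : ∀ (x : PadicInt p) (n : ℕ), Tendsto (fun m => (qNum q (p ^ (m + n)))⁻¹ *
      ∑ i ∈ range (p ^ m), f (x + (p : PadicInt p) ^ n * (i : PadicInt p))) atTop (𝓝 (μf x n))) :
    ∀ a : PadicInt p,
      Tendsto (fun n => qNum q (p ^ n) * μf a n) atTop (𝓝 (f a)) := by
  intro a
  obtain ⟨Df, hDfc, hDfe⟩ := hf
  have hP1 : (1:ℝ) < p := by exact_mod_cast hp.out.one_lt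
  have hP0 : (0:ℝ) < p := by linarith
  have hna' : ∀ x y : K, ‖x + y‖ ≤ max ‖x‖ ‖y‖ := hna
  -- bound on Df
  obtain ⟨y₀, -, hB⟩ := isCompact_univ.exists_isMaxOn Set.univ_nonempty
    (hDfc.norm.continuousOn (s := Set.univ))
  set B := ‖Df y₀‖ with hBdef
  have hB0 : (0:ℝ) ≤ B := norm_nonneg _
  have hdiff : ∀ x h : PadicInt p, ‖f (x + h) - f x‖ ≤ B * ‖h‖ := by
    intro x h
    rcases eq_or_ne h 0 with rfl | h0
    · simp
    · rw [← hDfe h x h0, norm_mul, hι]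
      exact mul_le_mul_of_nonneg_right (hB (Set.mem_univ _)) (norm_nonneg _)
  have hq' : ‖q - 1‖ < (p : ℝ) ^ (-1 / ((p:ℝ) - 1)) := by rwa [norm_sub_rev] at hq
  have hδ : (0:ℝ) < ‖q - 1‖ := norm_pos_iff.2 (sub_ne_zero.2 hq1)
  have hqpk : ∀ k : ℕ, ‖q ^ p ^ k - 1‖ = ((p:ℝ)⁻¹) ^ k * ‖q - 1‖ := pow_pk_norm hna hpK hq'
  have hrb1 : (p : ℝ) ^ (-1 / ((p:ℝ) - 1)) < 1 :=
    Real.rpow_lt_one_of_one_lt_of_neg hP1 (div_neg_of_neg_of_pos (by norm_num) (by linarith))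
  have hqnorm : ‖q‖ = 1 := by
    have h1 : ‖q - 1‖ < ‖(1:K)‖ := by rw [norm_one]; exact hq'.trans hrb1
    have h2 := na_add_eq_left hna h1
    rw [norm_one, show (1:K) + (q - 1) = q by ring] at h2
    exact h2
  have hqpknz : ∀ k : ℕ, (1 : K) - q ^ p ^ k ≠ 0 := by
    intro k
    apply norm_pos_iff.mp
    rw [norm_sub_rev, hqpk k]
    positivity
  have hqNumNorm : ∀ k : ℕ, ‖qNum q (p ^ k)‖ = ((p:ℝ)⁻¹) ^ k := by
    intro k
    rw [qNum, norm_div, norm_sub_rev, hqpk k, show ‖(1:K) - q‖ = ‖q - 1‖ from norm_sub_rev _ _]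
    field_simp
  have hqNumnz : ∀ k : ℕ, qNum q (p ^ k) ≠ 0 := by
    intro k
    apply norm_pos_iff.mp
    rw [hqNumNorm]
    positivity
  set Cf : ℝ := (p:ℝ) * max B (‖q - 1‖ * ‖f a‖) with hCf
  have key : ∀ n : ℕ, ‖qNum q (p ^ n) * μf a n - f a‖ ≤ Cf * ((p:ℝ)⁻¹) ^ n := by
    intro n
    set Q : K := q ^ p ^ n with hQdef
    have hQ1 : Q ≠ 1 := by
      intro hcon
      apply hqpknz n
      have : q ^ p ^ n = 1 := hQdef ▸ hcon
      rw [this, sub_self]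
    -- telescope for f
    have hUb : ∀ m : ℕ, ‖(∑ i ∈ range (p ^ m), f (a + (p : PadicInt p) ^ n * (i : PadicInt p)))
        - (p:K) ^ m * f a‖ ≤ (B * ((p:ℝ)⁻¹) ^ n) * (p:ℝ) * ((p:ℝ)⁻¹) ^ m := by
      intro m
      have hstep : ∀ k j r : ℕ, j < p → r < p ^ k →
          ‖f (a + (p : PadicInt p) ^ n * ((j * p ^ k + r : ℕ) : PadicInt p))
            - f (a + (p : PadicInt p) ^ n * ((r : ℕ) : PadicInt p))‖
          ≤ (B * ((p:ℝ)⁻¹) ^ n) * ((p:ℝ)⁻¹) ^ k := by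
        intro k j r hj hr
        have harg : a + (p : PadicInt p) ^ n * ((j * p ^ k + r : ℕ) : PadicInt p)
            = (a + (p : PadicInt p) ^ n * ((r : ℕ) : PadicInt p))
              + (p : PadicInt p) ^ (n + k) * (j : PadicInt p) := by
          push_cast
          ring
        rw [harg]
        have hjn : ‖(p : PadicInt p) ^ (n + k) * (j : PadicInt p)‖
            ≤ (p:ℝ)⁻¹ ^ n * (p:ℝ)⁻¹ ^ k := by
          rw [norm_mul, norm_pow, PadicInt.norm_p, pow_add]
          exact mul_le_of_le_one_right (by positivity) (PadicInt.norm_le_one _)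
        calc ‖f ((a + (p : PadicInt p) ^ n * ((r:ℕ) : PadicInt p))
                + (p : PadicInt p) ^ (n + k) * (j : PadicInt p))
              - f (a + (p : PadicInt p) ^ n * ((r:ℕ) : PadicInt p))‖
            ≤ B * ‖(p : PadicInt p) ^ (n + k) * (j : PadicInt p)‖ := hdiff _ _
          _ ≤ B * ((p:ℝ)⁻¹ ^ n * (p:ℝ)⁻¹ ^ k) := mul_le_mul_of_nonneg_left hjn hB0
          _ = (B * ((p:ℝ)⁻¹) ^ n) * ((p:ℝ)⁻¹) ^ k := by ring
      have := telescope (p := p) hna hpK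
        (g := fun i => f (a + (p : PadicInt p) ^ n * (i : PadicInt p)))
        (C := B * ((p:ℝ)⁻¹) ^ n) (by positivity) hstep m
      simpa using this
    -- telescope for Q-powers
    have hVb : ∀ m : ℕ, ‖qNum Q (p ^ m) - (p:K) ^ m‖
        ≤ (‖q - 1‖ * ((p:ℝ)⁻¹) ^ n) * (p:ℝ) * ((p:ℝ)⁻¹) ^ m := by
      intro m
      have hgeom : qNum Q (p ^ m) = ∑ i ∈ range (p ^ m), Q ^ i := by
        rw [geom_sum_eq hQ1, qNum, show (1:K) - Q ^ p ^ m = -(Q ^ p ^ m - 1) by ring,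
          show (1:K) - Q = -(Q - 1) by ring, neg_div_neg_eq]
      have hstep : ∀ k j r : ℕ, j < p → r < p ^ k →
          ‖Q ^ (j * p ^ k + r) - Q ^ r‖
          ≤ (‖q - 1‖ * ((p:ℝ)⁻¹) ^ n) * ((p:ℝ)⁻¹) ^ k := by
        intro k j r hj hr
        have hfac : Q ^ (j * p ^ k + r) - Q ^ r = ((Q ^ p ^ k) ^ j - 1) * Q ^ r := by
          rw [pow_add, mul_comm j (p ^ k), pow_mul]
          ring
        have hQr : ‖Q ^ r‖ = 1 := by
          rw [hQdef, ← pow_mul, norm_pow, hqnorm, one_pow]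
        have hy : ‖Q ^ p ^ k‖ = 1 := by
          rw [hQdef, ← pow_mul, norm_pow, hqnorm, one_pow]
        have hgj : ‖(Q ^ p ^ k) ^ j - 1‖ ≤ ‖Q ^ p ^ k - 1‖ := by
          rw [← geom_sum_mul, norm_mul]
          refine mul_le_of_le_one_left (norm_nonneg _) ?_
          refine na_sum hna _ _ zero_le_one ?_
          intro i _
          rw [norm_pow, hy, one_pow]
        have hQpk : ‖Q ^ p ^ k - 1‖ = ((p:ℝ)⁻¹) ^ (n + k) * ‖q - 1‖ := by
          rw [hQdef, ← pow_mul, ← pow_add]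
          exact hqpk (n + k)
        rw [hfac, norm_mul, hQr, mul_one]
        calc ‖(Q ^ p ^ k) ^ j - 1‖ ≤ ‖Q ^ p ^ k - 1‖ := hgj
          _ = (‖q - 1‖ * ((p:ℝ)⁻¹) ^ n) * ((p:ℝ)⁻¹) ^ k := by rw [hQpk, pow_add]; ring
      have := telescope (p := p) hna hpK (g := fun i => Q ^ i)
        (C := ‖q - 1‖ * ((p:ℝ)⁻¹) ^ n) (by positivity) hstep m
      rw [hgeom]
      simpa using this
    have hdnorm : ∀ m : ℕ, ‖qNum Q (p ^ m)‖ = ((p:ℝ)⁻¹) ^ m := by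
      intro m
      have h1 : ‖(1:K) - Q ^ p ^ m‖ = ((p:ℝ)⁻¹) ^ (n + m) * ‖q - 1‖ := by
        rw [norm_sub_rev, hQdef, ← pow_mul, ← pow_add]
        exact hqpk (n + m)
      have h2 : ‖(1:K) - Q‖ = ((p:ℝ)⁻¹) ^ n * ‖q - 1‖ := by
        rw [norm_sub_rev, hQdef]
        exact hqpk n
      rw [qNum, norm_div, h1, h2, pow_add]
      field_simp
    have hdnz : ∀ m : ℕ, qNum Q (p ^ m) ≠ 0 := by
      intro m
      apply norm_pos_iff.mp
      rw [hdnorm]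
      positivity
    have hsplitqnum : ∀ m : ℕ, qNum q (p ^ (m + n)) = qNum Q (p ^ m) * qNum q (p ^ n) := by
      intro m
      have h2 : (1:K) - q ≠ 0 := sub_ne_zero.mpr (Ne.symm hq1)
      have hQpm : Q ^ p ^ m = q ^ p ^ (m + n) := by
        rw [hQdef, ← pow_mul, ← pow_add, add_comm n m]
      rw [qNum, qNum, qNum, hQpm, hQdef, div_mul_div_comm,
        mul_comm ((1:K) - q ^ p ^ n) ((1:K) - q), mul_div_mul_right _ _ (hqpknz n)]
    have hmain : ∀ m : ℕ,
        ‖qNum q (p ^ n) * ((qNum q (p ^ (m + n)))⁻¹ *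
          ∑ i ∈ range (p ^ m), f (a + (p : PadicInt p) ^ n * (i : PadicInt p))) - f a‖
          ≤ Cf * ((p:ℝ)⁻¹) ^ n := by
      intro m
      set U : K := ∑ i ∈ range (p ^ m), f (a + (p : PadicInt p) ^ n * (i : PadicInt p)) with hUdef
      have hrw : qNum q (p ^ n) * ((qNum q (p ^ (m + n)))⁻¹ * U) = (qNum Q (p ^ m))⁻¹ * U := by
        rw [hsplitqnum m, mul_inv]
        field_simp [hdnz m, hqNumnz n]
      have hrw2 : (qNum Q (p ^ m))⁻¹ * U - f a
          = (qNum Q (p ^ m))⁻¹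
            * ((U - (p:K) ^ m * f a) + ((p:K) ^ m - qNum Q (p ^ m)) * f a) := by
        field_simp [hdnz m]
        ring
      set E : ℝ := max B (‖q - 1‖ * ‖f a‖) * (p:ℝ) * ((p:ℝ)⁻¹) ^ n * ((p:ℝ)⁻¹) ^ m with hE
      have hb1 : ‖U - (p:K) ^ m * f a‖ ≤ E := by
        calc ‖U - (p:K) ^ m * f a‖
            ≤ (B * ((p:ℝ)⁻¹) ^ n) * (p:ℝ) * ((p:ℝ)⁻¹) ^ m := hUb m
          _ = B * ((p:ℝ) * ((p:ℝ)⁻¹) ^ n * ((p:ℝ)⁻¹) ^ m) := by ring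
          _ ≤ max B (‖q - 1‖ * ‖f a‖) * ((p:ℝ) * ((p:ℝ)⁻¹) ^ n * ((p:ℝ)⁻¹) ^ m) :=
              mul_le_mul_of_nonneg_right (le_max_left _ _) (by positivity)
          _ = E := by rw [hE]; ring
      have hb2 : ‖((p:K) ^ m - qNum Q (p ^ m)) * f a‖ ≤ E := by
        calc ‖((p:K) ^ m - qNum Q (p ^ m)) * f a‖
            = ‖qNum Q (p ^ m) - (p:K) ^ m‖ * ‖f a‖ := by rw [norm_mul, norm_sub_rev]
          _ ≤ ((‖q - 1‖ * ((p:ℝ)⁻¹) ^ n) * (p:ℝ) * ((p:ℝ)⁻¹) ^ m) * ‖f a‖ :=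
              mul_le_mul_of_nonneg_right (hVb m) (norm_nonneg _)
          _ = (‖q - 1‖ * ‖f a‖) * ((p:ℝ) * ((p:ℝ)⁻¹) ^ n * ((p:ℝ)⁻¹) ^ m) := by ring
          _ ≤ max B (‖q - 1‖ * ‖f a‖) * ((p:ℝ) * ((p:ℝ)⁻¹) ^ n * ((p:ℝ)⁻¹) ^ m) :=
              mul_le_mul_of_nonneg_right (le_max_right _ _) (by positivity)
          _ = E := by rw [hE]; ring
      have hfinal : (((p:ℝ)⁻¹) ^ m)⁻¹ * E = Cf * ((p:ℝ)⁻¹) ^ n := by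
        rw [hE, hCf]
        field_simp
      rw [hrw, hrw2, norm_mul, norm_inv, hdnorm m]
      calc (((p:ℝ)⁻¹) ^ m)⁻¹
            * ‖(U - (p:K) ^ m * f a) + ((p:K) ^ m - qNum Q (p ^ m)) * f a‖
          ≤ (((p:ℝ)⁻¹) ^ m)⁻¹ * E := by
            refine mul_le_mul_of_nonneg_left ?_ (by positivity)
            exact le_trans (hna' _ _) (max_le hb1 hb2)
        _ = Cf * ((p:ℝ)⁻¹) ^ n := hfinal
    have hTend := ((hμf a n).const_mul (qNum q (p ^ n))).sub_const (f a)
    exact le_of_tendsto hTend.norm (Eventually.of_forall hmain)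
  have hlim : Tendsto (fun n : ℕ => Cf * ((p:ℝ)⁻¹) ^ n) atTop (𝓝 0) := by
    have h0 : Tendsto (fun n : ℕ => ((p:ℝ)⁻¹) ^ n) atTop (𝓝 0) :=
      tendsto_pow_atTop_nhds_zero_of_lt_one (by positivity) (inv_lt_one_of_one_lt₀ hP1)
    have := h0.const_mul Cf
    simpa using this
  rw [tendsto_iff_norm_sub_tendsto_zero]
  exact squeeze_zero (fun n => norm_nonneg _) key hlim
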